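/- Assume Ω is finitely connected at the boundary. Then every prime chain in Ω has a singleton impression, and every point x ∈ ∂Ω is accessible and is the impression of some prime chain. -/

import Mathlib

open Metric Set Filter Topology

/-- The distance between two subsets of a metric space
(infimum of pairwise distances, with `sInf ∅ = 0`). -/
noncomputable def setDist {X : Type*} [MetricSpace X] (A B : Set X) : ℝ :=
  sInf {d : ℝ | ∃ a ∈ A, ∃ b ∈ B, d = dist a b}

/-- `Ω` is a bounded domain: bounded, nonempty, open, connected, and not all of `X`. -/
def BoundedDomain {X : Type*} [MetricSpace X] (Ω : Set X) : Prop :=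
  IsOpen Ω ∧ IsConnected Ω ∧ Bornology.IsBounded Ω ∧ Ω ≠ Set.univ

/-- An acceptable set: a bounded connected set `E ⊊ Ω` whose closure meets `∂Ω`. -/
def Acceptable {X : Type*} [MetricSpace X] (Ω E : Set X) : Prop :=
  Bornology.IsBounded E ∧ IsConnected E ∧ E ⊆ Ω ∧ E ≠ Ω ∧
    (closure E ∩ frontier Ω).Nonempty

/-- A chain in `Ω`: a nested sequence of acceptable sets whose consecutive
relative boundaries are at positive distance and whose impression
`⋂ k, closure (E k)` lies in `∂Ω`. -/
def IsChainIn {X : Type*} [MetricSpace X] (Ω : Set X) (E : ℕ → Set X) : Prop :=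
  (∀ k, Acceptable Ω (E k)) ∧
  (∀ k, E (k + 1) ⊆ E k) ∧
  (∀ k, 0 < setDist (Ω ∩ frontier (E (k + 1))) (Ω ∩ frontier (E k))) ∧
  (⋂ k, closure (E k)) ⊆ frontier Ω

/-- A chain `E` divides a chain `F` if each `F k` contains some `E l`. -/
def Divides {X : Type*} (E F : ℕ → Set X) : Prop := ∀ k, ∃ l, E l ⊆ F k

/-- Two chains are equivalent if each divides the other. -/
def EquivChains {X : Type*} (E F : ℕ → Set X) : Prop := Divides E F ∧ Divides F E

/-- A prime chain: a chain such that every chain dividing it is equivalent to it. -/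
def IsPrimeChain {X : Type*} [MetricSpace X] (Ω : Set X) (E : ℕ → Set X) : Prop :=
  IsChainIn Ω E ∧ ∀ F : ℕ → Set X, IsChainIn Ω F → Divides F E → EquivChains F E

/-- A boundary point `x` is accessible if some curve in `Ω` ends at `x`. -/
def Accessible {X : Type*} [MetricSpace X] (Ω : Set X) (x : X) : Prop :=
  ∃ γ : ℝ → X, ContinuousOn γ (Set.Icc 0 1) ∧ γ 1 = x ∧ γ '' Set.Ico 0 1 ⊆ Ω

/-- `Ω` is finitely connected at `x₀` if each ball around `x₀` contains an open
neighborhood `G` of `x₀` such that `G ∩ Ω` has finitely many components. -/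
def FinitelyConnectedAt {X : Type*} [MetricSpace X] (Ω : Set X) (x₀ : X) : Prop :=
  ∀ r : ℝ, 0 < r → ∃ G : Set X, IsOpen G ∧ x₀ ∈ G ∧ G ⊆ Metric.ball x₀ r ∧
    {C : Set X | ∃ y ∈ G ∩ Ω, C = connectedComponentIn (G ∩ Ω) y}.Finite

/-!
Near a boundary point `x`, finite connectedness provides open neighbourhoods `G n` shrinking to
`x`, each well inside the previous one, and by pigeonhole a nested sequence of components `C n`
of `G n ∩ Ω` that still accumulate at `x` inside every set of a given chain. Consecutive relative
frontiers of the `C n` are then at positive distance, so `C` is a chain with impression `{x}`.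
A connected subset of `Ω` of diameter less than the distance between two consecutive relative
frontiers of a chain cannot cross them; hence `C` divides every chain that meets all the `C n`.
This makes `C` prime, and, when `C` is built inside a prime chain `E`, it forces the impression
of `E` to be `{x}`.

For accessibility: in a complete locally connected space, open connected sets are path
connected (a path is the limit of successively refined chains of small connected open links),
and concatenating paths inside `C 0, C 1, …` gives a curve ending at `x`.
-/

section Chains

variable {X : Type*} [MetricSpace X]

theorem setDist_le_dist {A B : Set X} {a b : X} (ha : a ∈ A) (hb : b ∈ B) :
    setDist A B ≤ dist a b :=
  csInf_le ⟨0, by rintro d ⟨a', -, b', -, rfl⟩; exact dist_nonneg⟩ ⟨a, ha, b, hb, rfl⟩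

theorem le_setDist {A B : Set X} {c : ℝ} (hA : A.Nonempty) (hB : B.Nonempty)
    (h : ∀ a ∈ A, ∀ b ∈ B, c ≤ dist a b) : c ≤ setDist A B := by
  obtain ⟨a, ha⟩ := hA
  obtain ⟨b, hb⟩ := hB
  exact le_csInf ⟨_, a, ha, b, hb, rfl⟩ (by rintro d ⟨a, ha, b, hb, rfl⟩; exact h a ha b hb)

theorem IsPreconnected.inter_frontier_nonempty {α : Type*} [TopologicalSpace α] {s t : Set α}
    (hs : IsPreconnected s) (hst : (s ∩ t).Nonempty) (hsnt : (s \ t).Nonempty) :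
    (s ∩ frontier t).Nonempty := by
  by_contra h
  have hint : closure t ∩ s ⊆ interior t := fun z hz => by
    by_contra hzi
    exact h ⟨z, hz.2, hz.1, hzi⟩
  have hsub : s ⊆ interior t := hs.subset_of_closure_inter_subset isOpen_interior
    (hst.mono fun z hz => ⟨hz.1, hint ⟨subset_closure hz.2, hz.1⟩⟩)
    ((inter_subset_inter_left _ (closure_mono interior_subset)).trans hint)
  obtain ⟨z, hzs, hzt⟩ := hsnt
  exact hzt (interior_subset (hsub hzs))

/-- A preconnected subset of `Ω` that meets `A ⊆ B` but leaves `B` would contain a point of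
`Ω ∩ ∂A` and a point of `Ω ∩ ∂B`. -/
theorem subset_of_forall_dist_lt_setDist {Ω A B S : Set X} (hAB : A ⊆ B)
    (hS : IsPreconnected S) (hSΩ : S ⊆ Ω) (hSA : (S ∩ A).Nonempty)
    (hsmall : ∀ a ∈ S, ∀ b ∈ S, dist a b < setDist (Ω ∩ frontier A) (Ω ∩ frontier B)) :
    S ⊆ B := by
  by_contra hSB
  obtain ⟨z, hzS, hzB⟩ := not_subset.1 hSB
  obtain ⟨a, haS, ha⟩ := hS.inter_frontier_nonempty hSA ⟨z, hzS, fun hzA => hzB (hAB hzA)⟩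
  obtain ⟨b, hbS, hb⟩ :=
    hS.inter_frontier_nonempty (hSA.mono (inter_subset_inter_right _ hAB)) ⟨z, hzS, hzB⟩
  exact (hsmall a haS b hbS).not_ge (setDist_le_dist ⟨hSΩ haS, ha⟩ ⟨hSΩ hbS, hb⟩)

theorem divides_of_tendsto_smallSets {Ω : Set X} {E C : ℕ → Set X} {x : X}
    (hE : IsChainIn Ω E) (hC : ∀ n, IsPreconnected (C n)) (hCΩ : ∀ n, C n ⊆ Ω)
    (hmeet : ∀ n k, (C n ∩ E k).Nonempty) (hx : Tendsto C atTop (𝓝 x).smallSets) :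
    Divides C E := by
  intro k
  set δ := setDist (Ω ∩ frontier (E (k + 1))) (Ω ∩ frontier (E k))
  obtain ⟨n, hn⟩ :=
    (tendsto_smallSets_iff.1 hx _ (ball_mem_nhds x (half_pos (hE.2.2.1 k)))).exists
  refine ⟨n, subset_of_forall_dist_lt_setDist (hE.2.1 k) (hC n) (hCΩ n) (hmeet n (k + 1))
    fun a ha b hb => ?_⟩
  calc dist a b ≤ dist a x + dist b x := dist_triangle_right a b x
    _ < δ / 2 + δ / 2 := add_lt_add (hn ha) (hn hb)
    _ = δ := add_halves δ

theorem isPrimeChain_of_tendsto_smallSets {Ω : Set X} {C : ℕ → Set X} {x : X}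
    (hC : IsChainIn Ω C) (hx : Tendsto C atTop (𝓝 x).smallSets) : IsPrimeChain Ω C := by
  refine ⟨hC, fun F hF hFC => ⟨hFC, divides_of_tendsto_smallSets hF
    (fun n => (hC.1 n).2.1.isPreconnected) (fun n => (hC.1 n).2.2.1) (fun n k => ?_) hx⟩⟩
  obtain ⟨i, hi⟩ := hFC n
  obtain ⟨z, hz⟩ := (hF.1 (max i k)).2.1.nonempty
  have hF' : Antitone F := antitone_nat_of_succ_le hF.2.1
  exact ⟨z, hi (hF' (le_max_left i k) hz), hF' (le_max_right i k) hz⟩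

theorem Divides.iInter_closure_subset {α : Type*} [TopologicalSpace α] {E F : ℕ → Set α}
    (h : Divides E F) : ⋂ k, closure (E k) ⊆ ⋂ k, closure (F k) :=
  subset_iInter fun k =>
    let ⟨l, hl⟩ := h k
    (iInter_subset _ l).trans (closure_mono hl)

theorem iInter_closure_eq_singleton_of_tendsto_smallSets {α : Type*} [TopologicalSpace α]
    [T2Space α] {C : ℕ → Set α} {x : α} (hanti : Antitone C) (hne : ∀ n, (C n).Nonempty)
    (hx : Tendsto C atTop (𝓝 x).smallSets) : ⋂ n, closure (C n) = {x} := by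
  refine Subset.antisymm (fun z hz => ?_) (singleton_subset_iff.2 (mem_iInter.2 fun n => ?_))
  · by_contra hzx
    obtain ⟨U, V, hU, hV, hzU, hxV, hUV⟩ := t2_separation hzx
    obtain ⟨n, hn⟩ := (tendsto_smallSets_iff.1 hx V (hV.mem_nhds hxV)).exists
    obtain ⟨w, hwU, hwC⟩ := mem_closure_iff.1 (mem_iInter.1 hz n) U hU hzU
    exact hUV.le_bot ⟨hwU, hn hwC⟩
  · refine mem_closure_iff_nhds.2 fun U hU => ?_
    obtain ⟨m, hmU, hnm⟩ :=
      ((tendsto_smallSets_iff.1 hx U hU).and (eventually_ge_atTop n)).exists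
    obtain ⟨w, hw⟩ := hne m
    exact ⟨w, hmU hw, hanti hnm hw⟩

theorem IsChainIn.iInter_closure_eq_singleton {Ω : Set X} {C : ℕ → Set X} {x : X}
    (hC : IsChainIn Ω C) (hx : Tendsto C atTop (𝓝 x).smallSets) :
    ⋂ n, closure (C n) = {x} :=
  iInter_closure_eq_singleton_of_tendsto_smallSets (antitone_nat_of_succ_le hC.2.1)
    (fun n => (hC.1 n).2.1.nonempty) hx

theorem IsChainIn.iInter_closure_nonempty [ProperSpace X] {Ω : Set X} {E : ℕ → Set X}
    (hE : IsChainIn Ω E) : (⋂ k, closure (E k)).Nonempty :=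
  IsCompact.nonempty_iInter_of_sequence_nonempty_isCompact_isClosed _
    (fun k => closure_mono (hE.2.1 k)) (fun k => (hE.1 k).2.1.nonempty.closure)
    (hE.1 0).1.isCompact_closure fun _ => isClosed_closure

end Chains

theorem exists_seq_of_step {α : Type*} (P : ℕ → α → Prop) (R : ℕ → α → α → Prop) {a : α}
    (ha : P 0 a) (h : ∀ n a, P n a → ∃ b, P (n + 1) b ∧ R n a b) :
    ∃ f : ℕ → α, ∀ n, P n (f n) ∧ R n (f n) (f (n + 1)) := by
  have h' : ∀ n a, ∃ b, P n a → P (n + 1) b ∧ R n a b := fun n a => by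
    by_cases hPa : P n a
    · obtain ⟨b, hb⟩ := h n a hPa
      exact ⟨b, fun _ => hb⟩
    · exact ⟨a, fun hPa' => absurd hPa' hPa⟩
  choose g hg using h'
  let f : ℕ → α := fun n => Nat.rec a g n
  have hf : ∀ n, P n (f n) := fun n => by
    induction n with
    | zero => exact ha
    | succ n ih => exact (hg n (f n) ih).1
  exact ⟨f, fun n => ⟨hf n, (hg n (f n) (hf n)).2⟩⟩

theorem Set.Finite.exists_forall_of_antitone {α : Type*} {S : Set α} (hS : S.Finite)
    {P : ℕ → α → Prop} (hP : ∀ a, Antitone (P · a)) (h : ∀ k, ∃ a ∈ S, P k a) :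
    ∃ a ∈ S, ∀ k, P k a := by
  by_contra! hne
  have hev : ∀ᶠ k in atTop, ∀ a ∈ S, ¬P k a := (eventually_all_finite hS).2 fun a ha => by
    obtain ⟨k, hk⟩ := hne a ha
    exact eventually_atTop.2 ⟨k, fun j hj hPj => hk (hP a hj hPj)⟩
  obtain ⟨k, hk⟩ := hev.exists
  obtain ⟨a, ha, hPa⟩ := h k
  exact hk a ha hPa

section Tower

variable {X : Type*} [MetricSpace X]

theorem exists_connectedComponentIn_mem_closure {Ω G : Set X} {x : X} (hG : G ∈ 𝓝 x)
    (hfin : {C : Set X | ∃ y ∈ G ∩ Ω, C = connectedComponentIn (G ∩ Ω) y}.Finite)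
    {T : ℕ → Set X} (hT : Antitone T) (hTΩ : ∀ k, T k ⊆ Ω) (hTx : ∀ k, x ∈ closure (T k)) :
    ∃ y ∈ G ∩ Ω, ∀ k, x ∈ closure (connectedComponentIn (G ∩ Ω) y ∩ T k) := by
  set S := {C : Set X | ∃ y ∈ G ∩ Ω, C = connectedComponentIn (G ∩ Ω) y}
  have hex (k : ℕ) : ∃ C ∈ S, x ∈ closure (C ∩ T k) := by
    have hxGT : x ∈ closure (G ∩ T k) := mem_closure_iff_nhds.2 fun U hU => by
      simpa only [inter_assoc] using mem_closure_iff_nhds.1 (hTx k) (U ∩ G) (inter_mem hU hG)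
    have hcover : G ∩ T k ⊆ ⋃ C ∈ S, C ∩ T k := fun z hz =>
      mem_biUnion ⟨z, ⟨hz.1, hTΩ k hz.2⟩, rfl⟩
        ⟨mem_connectedComponentIn ⟨hz.1, hTΩ k hz.2⟩, hz.2⟩
    have := closure_mono hcover hxGT
    rw [hfin.closure_biUnion] at this
    simpa only [mem_iUnion₂, exists_prop] using this
  obtain ⟨C, ⟨y, hy, rfl⟩, hC⟩ := hfin.exists_forall_of_antitone
    (P := fun k C => x ∈ closure (C ∩ T k))
    (fun C i j hij hx => closure_mono (inter_subset_inter_right _ (hT hij)) hx) hex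
  exact ⟨y, hy, hC⟩

/-- `C` is a component of `G ∩ Ω` (a connected, relatively clopen subset) that accumulates at
`x` inside every `W k`. -/
structure IsComponentAt (Ω : Set X) (W : ℕ → Set X) (x : X) (G C : Set X) : Prop where
  isOpen_nhd : IsOpen G
  mem_nhd : x ∈ G
  isOpen : IsOpen C
  isPreconnected : IsPreconnected C
  subset : C ⊆ G ∩ Ω
  closure_inter_subset : closure C ∩ (G ∩ Ω) ⊆ C
  mem_closure : ∀ k, x ∈ closure (C ∩ W k)

theorem closure_connectedComponentIn_inter_subset {α : Type*} [TopologicalSpace α] {F : Set α}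
    {y : α} : closure (connectedComponentIn F y) ∩ F ⊆ connectedComponentIn F y := by
  rintro z ⟨hzC, hzF⟩
  obtain ⟨c, hc⟩ := closure_nonempty_iff.1 ⟨z, hzC⟩
  have hpre : IsPreconnected (insert z (connectedComponentIn F y)) :=
    isPreconnected_connectedComponentIn.subset_closure (subset_insert _ _)
      (insert_subset hzC subset_closure)
  have hyF : y ∈ F := connectedComponentIn_nonempty_iff.1 ⟨c, hc⟩
  exact hpre.subset_connectedComponentIn (mem_insert_of_mem _ (mem_connectedComponentIn hyF))
    (insert_subset hzF (connectedComponentIn_subset F y)) (mem_insert z _)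

theorem IsComponentAt.exists_next [LocallyConnectedSpace X] {Ω : Set X} {W : ℕ → Set X}
    {x : X} (hΩ : IsOpen Ω) (hfc : FinitelyConnectedAt Ω x) (hW : Antitone W)
    (hWΩ : ∀ k, W k ⊆ Ω) {G C : Set X} (hC : IsComponentAt Ω W x G C) {r : ℝ} (hr : 0 < r) :
    ∃ G' C', IsComponentAt Ω W x G' C' ∧ C' ⊆ C ∧
      ∃ ε, 0 < ε ∧ ε ≤ r ∧ ball x ε ⊆ G ∧ G' ⊆ ball x (ε / 2) := by
  obtain ⟨ε, hε, hεG⟩ := Metric.isOpen_iff.1 hC.isOpen_nhd x hC.mem_nhd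
  have hε' : 0 < min ε r := lt_min hε hr
  obtain ⟨G', hG'o, hxG', hG'ball, hfin⟩ := hfc (min ε r / 2) (half_pos hε')
  obtain ⟨y, hy, hyC⟩ := exists_connectedComponentIn_mem_closure (hG'o.mem_nhds hxG') hfin
    (T := fun k => C ∩ W k) (fun i j hij => inter_subset_inter_right _ (hW hij))
    (fun k => inter_subset_right.trans (hWΩ k)) hC.mem_closure
  have hminG : ball x (min ε r) ⊆ G := (ball_subset_ball (min_le_left ε r)).trans hεG
  have hG'G : G' ∩ Ω ⊆ G ∩ Ω :=
    inter_subset_inter_left _ (hG'ball.trans ((ball_subset_ball (by linarith)).trans hminG))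
  have hsub : connectedComponentIn (G' ∩ Ω) y ⊆ C := by
    refine isPreconnected_connectedComponentIn.subset_of_closure_inter_subset hC.isOpen ?_
      fun z hz => hC.closure_inter_subset ⟨hz.1, hG'G (connectedComponentIn_subset _ _ hz.2)⟩
    obtain ⟨z, hz⟩ := closure_nonempty_iff.1 ⟨x, hyC 0⟩
    exact ⟨z, hz.1, hz.2.1⟩
  refine ⟨G', _, ⟨hG'o, hxG', (hG'o.inter hΩ).connectedComponentIn,
    isPreconnected_connectedComponentIn, connectedComponentIn_subset _ _,
    closure_connectedComponentIn_inter_subset, fun k => closure_mono ?_ (hyC k)⟩, hsub,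
    min ε r, hε', min_le_right ε r, hminG, hG'ball⟩
  exact inter_subset_inter_right _ inter_subset_right

/-- Inside `Ω`, the frontier of `C` lies outside `G ⊇ ball x ε`, while that of `C'` lies in
`closure G' ⊆ closedBall x (ε / 2)`. -/
theorem half_le_setDist_frontier {Ω G G' C C' : Set X} {x : X} {ε : ℝ} (hCo : IsOpen C)
    (hC : closure C ∩ (G ∩ Ω) ⊆ C) (hC' : C' ⊆ G') (hεG : ball x ε ⊆ G)
    (hG' : G' ⊆ ball x (ε / 2)) (hne' : (Ω ∩ frontier C').Nonempty)
    (hne : (Ω ∩ frontier C).Nonempty) :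
    ε / 2 ≤ setDist (Ω ∩ frontier C') (Ω ∩ frontier C) := by
  refine le_setDist hne' hne fun a ha b hb => ?_
  have hbG : b ∉ G := fun hbG => by
    rw [hCo.frontier_eq] at hb
    exact hb.2.2 (hC ⟨hb.2.1, hbG, hb.1⟩)
  have hb' : ε ≤ dist b x := not_lt.1 fun h => hbG (hεG h)
  have ha' : dist a x ≤ ε / 2 :=
    closure_ball_subset_closedBall (closure_mono (hC'.trans hG') (frontier_subset_closure ha.2))
  linarith [dist_triangle_left b x a, dist_comm a b]

theorem exists_seq_isComponentAt [LocallyConnectedSpace X] {Ω : Set X} {W : ℕ → Set X} {x : X}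
    (hΩ : IsOpen Ω) (hΩc : IsPreconnected Ω) (hfc : FinitelyConnectedAt Ω x) (hW : Antitone W)
    (hWΩ : ∀ k, W k ⊆ Ω) (hWx : ∀ k, x ∈ closure (W k)) {r : ℕ → ℝ} (hr : ∀ n, 0 < r n) :
    ∃ G C : ℕ → Set X, ∀ n, IsComponentAt Ω W x (G n) (C n) ∧ C (n + 1) ⊆ C n ∧
      ∃ ε, 0 < ε ∧ ε ≤ r n ∧ ball x ε ⊆ G n ∧ G (n + 1) ⊆ ball x (ε / 2) := by
  -- start from the trivial component `Ω` of `univ ∩ Ω`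
  obtain ⟨s, hs⟩ := exists_seq_of_step (fun _ s => IsComponentAt Ω W x s.1 s.2)
    (fun n s t => t.2 ⊆ s.2 ∧ ∃ ε, 0 < ε ∧ ε ≤ r n ∧ ball x ε ⊆ s.1 ∧ t.1 ⊆ ball x (ε / 2))
    (a := (univ, Ω)) ⟨isOpen_univ, mem_univ x, hΩ, hΩc, by simp,
      inter_subset_right.trans inter_subset_right,
      fun k => by rw [inter_eq_right.2 (hWΩ k)]; exact hWx k⟩
    fun n s hs => by
      obtain ⟨G', C', h⟩ := hs.exists_next hΩ hfc hW hWΩ (hr n)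
      exact ⟨(G', C'), h⟩
  exact ⟨fun n => (s n).1, fun n => (s n).2, hs⟩

theorem exists_chain_tendsto_smallSets [LocallyConnectedSpace X] {Ω : Set X}
    (hΩ : BoundedDomain Ω) {x : X} (hx : x ∈ frontier Ω) (hfc : FinitelyConnectedAt Ω x)
    {W : ℕ → Set X} (hW : Antitone W) (hWΩ : ∀ k, W k ⊆ Ω) (hWx : ∀ k, x ∈ closure (W k)) :
    ∃ C : ℕ → Set X, IsChainIn Ω C ∧ (∀ n, IsOpen (C n)) ∧
      Tendsto C atTop (𝓝 x).smallSets ∧ ∀ n k, (C n ∩ W k).Nonempty := by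
  obtain ⟨hΩo, hΩc, hΩb, -⟩ := hΩ
  obtain ⟨ω, hω⟩ := hΩc.nonempty
  have hxω : 0 < dist x ω := dist_pos.2 fun h => (hΩo.frontier_eq ▸ hx).2 (h ▸ hω)
  set r : ℕ → ℝ := fun n => dist x ω / 2 ^ n
  have hr : Tendsto r atTop (𝓝 0) :=
    tendsto_const_nhds.div_atTop (tendsto_pow_atTop_atTop_of_one_lt one_lt_two)
  obtain ⟨G, C', hs⟩ := exists_seq_isComponentAt hΩo hΩc.isPreconnected hfc hW hWΩ hWx
    (fun n => by positivity : ∀ n, 0 < r n)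
  set C : ℕ → Set X := fun n => C' (n + 1)
  have hcomp (n : ℕ) : IsComponentAt Ω W x (G (n + 1)) (C n) := (hs (n + 1)).1
  have hanti : Antitone C := antitone_nat_of_succ_le fun n => (hs (n + 1)).2.1
  have hmeet (n k : ℕ) : (C n ∩ W k).Nonempty :=
    closure_nonempty_iff.1 ⟨x, (hcomp n).mem_closure k⟩
  have hball (n : ℕ) : C n ⊆ ball x (r n) := by
    obtain ⟨ε, hε, hεr, -, hG⟩ := (hs n).2.2
    exact fun z hz => ball_subset_ball (by linarith) (hG ((hcomp n).subset hz).1)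
  have hCΩ (n : ℕ) : C n ⊆ Ω := fun z hz => ((hcomp n).subset hz).2
  have hωC (n : ℕ) : ω ∉ C n := fun h =>
    (mem_ball'.1 (hanti (Nat.zero_le n) h |> hball 0)).not_ge (by simp [r])
  have hfr (n : ℕ) : (Ω ∩ frontier (C n)).Nonempty :=
    hΩc.isPreconnected.inter_frontier_nonempty
      (((hmeet n 0).mono inter_subset_left).mono fun z hz => ⟨hCΩ n hz, hz⟩) ⟨ω, hω, hωC n⟩
  have htendsto : Tendsto C atTop (𝓝 x).smallSets := tendsto_smallSets_iff.2 fun U hU => by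
    obtain ⟨δ, hδ, hδU⟩ := Metric.mem_nhds_iff.1 hU
    filter_upwards [hr.eventually (gt_mem_nhds hδ)] with n hn
    exact (hball n).trans ((ball_subset_ball hn.le).trans hδU)
  have hchain : IsChainIn Ω C := by
    refine ⟨fun n => ⟨hΩb.subset (hCΩ n), ⟨(hmeet n 0).mono inter_subset_left,
      (hcomp n).isPreconnected⟩, hCΩ n, fun h => hωC n (h ▸ hω),
      x, closure_mono inter_subset_left ((hcomp n).mem_closure 0), hx⟩,
      fun n => (hs (n + 1)).2.1, fun n => ?_, ?_⟩
    · obtain ⟨ε, hε, -, hεG, hG⟩ := (hs (n + 1)).2.2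
      exact (half_pos hε).trans_le (half_le_setDist_frontier (hcomp n).isOpen
        (hcomp n).closure_inter_subset (fun z hz => ((hcomp (n + 1)).subset hz).1) hεG hG
        (hfr (n + 1)) (hfr n))
    · rw [iInter_closure_eq_singleton_of_tendsto_smallSets hanti
        (fun n => (hmeet n 0).mono inter_subset_left) htendsto]
      exact singleton_subset_iff.2 hx
  exact ⟨C, hchain, fun n => (hcomp n).isOpen, htendsto, hmeet⟩

end Tower

theorem Nat.add_one_div_mod_cases {K : ℕ} (hK : 0 < K) (i : ℕ) :
    (i + 1) / K = i / K ∧ (i + 1) % K = i % K + 1 ∨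
      (i + 1) / K = i / K + 1 ∧ (i + 1) % K = 0 ∧ i % K + 1 = K := by
  have hi := Nat.div_add_mod i K
  rcases (Nat.succ_le_of_lt (Nat.mod_lt i hK)).lt_or_eq with h | h
  · exact Or.inl ((Nat.div_mod_unique hK).2 ⟨by linarith, h⟩)
  · have hq : 0 + K * (i / K + 1) = i + 1 := by rw [mul_add]; linarith
    obtain ⟨hdiv, hmod⟩ := (Nat.div_mod_unique hK).2 ⟨hq, hK⟩
    exact Or.inr ⟨hdiv, hmod, h⟩

theorem Nat.floor_le_floor_add_one_of_lt {x y : ℝ} (h : y < x + 1) : ⌊y⌋₊ ≤ ⌊x⌋₊ + 1 := by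
  rcases Nat.eq_zero_or_pos ⌊y⌋₊ with h0 | hpos
  · omega
  have hy : (⌊y⌋₊ : ℝ) ≤ y := Nat.floor_le (by linarith [Nat.floor_pos.1 hpos])
  have : (⌊y⌋₊ : ℝ) < ⌊x⌋₊ + 2 := by linarith [Nat.lt_floor_add_one x]
  have : ⌊y⌋₊ < ⌊x⌋₊ + 2 := by exact_mod_cast this
  omega

theorem locallyFinite_Icc_natCast : LocallyFinite fun n : ℕ => Icc (n : ℝ) (n + 1) := by
  intro t
  refine ⟨Ioo (t - 1) (t + 1), Ioo_mem_nhds (by linarith) (by linarith),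
    (finite_lt_nat ⌈t + 1⌉₊).subset ?_⟩
  rintro n ⟨y, hy, hy'⟩
  exact Nat.lt_ceil.2 (by linarith [hy.1, hy'.2])

section Paths

variable {X : Type*} [MetricSpace X]

theorem uniformContinuous_of_forall_dist_le {Y : Type*} [PseudoMetricSpace Y] {f : Y → X}
    {u : ℕ → Y → X} {c : ℕ → ℝ} (hc : Tendsto c atTop (𝓝 0))
    (hfu : ∀ n y, dist (u n y) (f y) ≤ c n)
    (hu : ∀ n, ∃ δ > 0, ∀ y z, dist y z < δ → dist (u n y) (u n z) ≤ c n) :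
    UniformContinuous f := by
  refine Metric.uniformContinuous_iff.2 fun ε hε => ?_
  obtain ⟨n, hn⟩ := (hc.eventually (gt_mem_nhds (by positivity : 0 < ε / 3))).exists
  obtain ⟨δ, hδ, hδu⟩ := hu n
  refine ⟨δ, hδ, fun {y z} hyz => ?_⟩
  calc dist (f y) (f z) ≤ dist (f y) (u n y) + dist (u n y) (u n z) + dist (u n z) (f z) :=
        dist_triangle4 _ _ _ _
    _ ≤ c n + c n + c n := by
        gcongr
        exacts [dist_comm (f y) _ ▸ hfu n y, hδu y z hyz, hfu n z]
    _ < ε := by linarith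

theorem exists_isPreconnected_nhds_closure_subset [LocallyConnectedSpace X] {U : Set X} {b : X}
    (hU : IsOpen U) (hb : b ∈ U) {ε : ℝ} (hε : 0 < ε) :
    ∃ D, IsOpen D ∧ IsPreconnected D ∧ b ∈ D ∧ D ⊆ ball b ε ∧ closure D ⊆ U := by
  obtain ⟨s, hs, hsU⟩ := nhds_basis_closedBall.mem_iff.1 (hU.mem_nhds hb)
  have hm : 0 < min s ε := lt_min hs hε
  refine ⟨connectedComponentIn (ball b (min s ε)) b, isOpen_ball.connectedComponentIn,
    isPreconnected_connectedComponentIn, mem_connectedComponentIn (mem_ball_self hm),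
    (connectedComponentIn_subset _ _).trans (ball_subset_ball (min_le_right s ε)), ?_⟩
  exact (closure_mono (connectedComponentIn_subset _ _)).trans (closure_ball_subset_closedBall.trans
    ((closedBall_subset_closedBall (min_le_left s ε)).trans hsU))

/-- Chains are indexed by all of `ℕ` and stationary at `b` from index `M` on, so that
lengthening a chain is free. -/
structure IsLinkChain (V : Set X) (ε : ℝ) (a b : X) (M : ℕ) (p : ℕ → X) (D : ℕ → Set X) :
    Prop where
  head : p 0 = a
  tail : ∀ i, M ≤ i → p i = b
  mem : ∀ i, p i ∈ D i
  mem_succ : ∀ i, p (i + 1) ∈ D i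
  isOpen : ∀ i, IsOpen (D i)
  isPreconnected : ∀ i, IsPreconnected (D i)
  subset_ball : ∀ i, D i ⊆ ball (p i) ε
  closure_subset : ∀ i, closure (D i) ⊆ V

namespace IsLinkChain

variable {V : Set X} {ε : ℝ} {a b c : X} {M N : ℕ} {p q : ℕ → X} {D E : ℕ → Set X}

theorem exists_const [LocallyConnectedSpace X] (hV : IsOpen V) (ha : a ∈ V) (hε : 0 < ε) :
    ∃ p D, IsLinkChain V ε a a 0 p D := by
  obtain ⟨D, hDo, hDc, haD, hDb, hDV⟩ := exists_isPreconnected_nhds_closure_subset hV ha hε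
  exact ⟨fun _ => a, fun _ => D, rfl, fun _ _ => rfl, fun _ => haD, fun _ => haD, fun _ => hDo,
    fun _ => hDc, fun _ => hDb, fun _ => hDV⟩

theorem exists_link [LocallyConnectedSpace X] {D₀ : Set X} (hV : IsOpen V) (hε : 0 < ε)
    (hD₀ : IsOpen D₀) (hD₀c : IsPreconnected D₀) (ha : a ∈ D₀) (hb : b ∈ D₀)
    (hD₀b : D₀ ⊆ ball a ε) (hD₀V : closure D₀ ⊆ V) : ∃ p D, IsLinkChain V ε a b 1 p D := by
  obtain ⟨E₀, hE₀o, hE₀c, hbE₀, hE₀b, hE₀V⟩ :=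
    exists_isPreconnected_nhds_closure_subset hV (hD₀V (subset_closure hb)) hε
  refine ⟨fun i => if i = 0 then a else b, fun i => if i = 0 then D₀ else E₀, by simp,
    fun i hi => by simp [Nat.one_le_iff_ne_zero.1 hi], fun i => ?_, fun i => ?_, fun i => ?_,
    fun i => ?_, fun i => ?_, fun i => ?_⟩ <;>
    by_cases hi : i = 0 <;> simp only [hi, if_true, if_false, Nat.add_one_ne_zero] <;> assumption

theorem trans (h₁ : IsLinkChain V ε a b M p D) (h₂ : IsLinkChain V ε b c N q E) :
    IsLinkChain V ε a c (M + N) (fun i => if i < M then p i else q (i - M))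
      (fun i => if i < M then D i else E (i - M)) where
  head := by
    by_cases hM : 0 < M
    · simp [hM, h₁.head]
    · simp only [hM, if_false, Nat.zero_sub, h₂.head]
      exact (h₁.tail 0 (by omega)).symm.trans h₁.head
  tail i hi := by simp only [show ¬i < M by omega, if_false, h₂.tail _ (by omega : N ≤ i - M)]
  mem i := by split_ifs; exacts [h₁.mem i, h₂.mem _]
  mem_succ i := by
    split_ifs with hi hi' hi'
    · exact h₁.mem_succ i
    · rw [show i + 1 - M = 0 by omega, h₂.head, ← h₁.tail (i + 1) (by omega)]
      exact h₁.mem_succ i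
    · omega
    · rw [show i + 1 - M = i - M + 1 by omega]
      exact h₂.mem_succ _
  isOpen i := by split_ifs; exacts [h₁.isOpen i, h₂.isOpen _]
  isPreconnected i := by split_ifs; exacts [h₁.isPreconnected i, h₂.isPreconnected _]
  subset_ball i := by split_ifs; exacts [h₁.subset_ball i, h₂.subset_ball _]
  closure_subset i := by split_ifs; exacts [h₁.closure_subset i, h₂.closure_subset _]

theorem dist_le (h : IsLinkChain V ε a b M p D) {i j : ℕ} (hij : i ≤ j) (hji : j ≤ i + 1) :
    dist (p i) (p j) ≤ ε := by
  rcases (show j = i ∨ j = i + 1 by omega) with rfl | rfl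
  · exact (dist_self _).trans_le (dist_nonneg.trans (mem_ball.1 (h.subset_ball j (h.mem j))).le)
  · exact (dist_comm _ _).trans_le (mem_ball.1 (h.subset_ball i (h.mem_succ i))).le

theorem dist_floor_mul_le (h : IsLinkChain V ε a b M p D) {s t : ℝ}
    (hst : dist s t < 1 / (M + 1)) :
    dist (p ⌊s * M⌋₊) (p ⌊t * M⌋₊) ≤ ε := by
  wlog hle : s ≤ t generalizing s t
  · rw [dist_comm]
    exact this (by rwa [dist_comm]) (le_of_not_ge hle)
  rw [Real.dist_eq, abs_sub_comm, abs_of_nonneg (by linarith)] at hst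
  have hM : (t - s) * M < 1 := calc
    (t - s) * M ≤ 1 / (M + 1) * M := by gcongr
    _ < 1 := by rw [one_div_mul_eq_div, div_lt_one (by positivity)]; linarith
  exact h.dist_le (Nat.floor_mono (by gcongr)) (Nat.floor_le_floor_add_one_of_lt (by linarith))

end IsLinkChain

theorem IsPreconnected.exists_isLinkChain [LocallyConnectedSpace X] {V : Set X}
    (hVc : IsPreconnected V) (hV : IsOpen V) {a b : X} (ha : a ∈ V) (hb : b ∈ V) {ε : ℝ}
    (hε : 0 < ε) : ∃ M p D, IsLinkChain V ε a b M p D := by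
  refine hVc.induction₂' (fun a b => ∃ M p D, IsLinkChain V ε a b M p D) (fun x hx => ?_)
    (fun a b c _ _ _ ⟨M, p, D, h₁⟩ ⟨N, q, E, h₂⟩ => ⟨M + N, _, _, h₁.trans h₂⟩) ha hb
  obtain ⟨D, hDo, hDc, hxD, hDb, hDV⟩ :=
    exists_isPreconnected_nhds_closure_subset hV hx (half_pos hε)
  filter_upwards [mem_nhdsWithin_of_mem_nhds (hDo.mem_nhds hxD)] with y hy
  have hDx : D ⊆ ball x ε := hDb.trans (ball_subset_ball (half_le_self hε.le))
  have hDy : D ⊆ ball y ε := fun z hz => calc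
    dist z y ≤ dist z x + dist y x := dist_triangle_right z y x
    _ < ε / 2 + ε / 2 := add_lt_add (hDb hz) (hDb hy)
    _ = ε := add_halves ε
  exact ⟨⟨1, IsLinkChain.exists_link hV hε hDo hDc hxD hy hDx hDV⟩,
    ⟨1, IsLinkChain.exists_link hV hε hDo hDc hy hxD hDy hDV⟩⟩

/-- Each link of a chain is replaced by a finer chain inside it; padding all of them to a
common length `K` makes the new chain's `i`-th link lie in the old `(i / K)`-th one. -/
theorem IsLinkChain.exists_refinement [LocallyConnectedSpace X] {V : Set X} {ε ε' : ℝ}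
    {a b : X} {M : ℕ} {p : ℕ → X} {D : ℕ → Set X} (h : IsLinkChain V ε a b M p D)
    (hε' : 0 < ε') : ∃ K, 0 < K ∧ ∃ p' D', IsLinkChain V ε' a b (M * K) p' D' ∧
      ∀ i, closure (D' i) ⊆ D (i / K) := by
  have hseg (j : ℕ) : ∃ m q E, IsLinkChain (D j) ε' (p j) (p (j + 1)) m q E ∧
      (M ≤ j → m = 0) := by
    by_cases hj : M ≤ j
    · obtain ⟨q, E, hq⟩ := exists_const (h.isOpen j) (h.mem j) hε'
      rw [h.tail (j + 1) (by omega), ← h.tail j hj]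
      exact ⟨0, q, E, hq, fun _ => rfl⟩
    · obtain ⟨m, q, E, hq⟩ :=
        (h.isPreconnected j).exists_isLinkChain (h.isOpen j) (h.mem j) (h.mem_succ j) hε'
      exact ⟨m, q, E, hq, fun hj' => absurd hj' hj⟩
  choose m q E hseg hm using hseg
  set K := (Finset.range M).sup m + 1
  have hK : 0 < K := Nat.succ_pos _
  have hmK (j : ℕ) : m j ≤ K := by
    by_cases hj : M ≤ j
    · simp [hm j hj]
    · exact (Finset.le_sup (Finset.mem_range.2 (not_le.1 hj))).trans (Nat.le_succ _)
  refine ⟨K, hK, fun i => q (i / K) (i % K), fun i => E (i / K) (i % K), ⟨?_, fun i hi => ?_,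
    fun i => (hseg _).mem _, fun i => ?_, fun i => (hseg _).isOpen _,
    fun i => (hseg _).isPreconnected _, fun i => (hseg _).subset_ball _,
    fun i => ((hseg _).closure_subset _).trans (subset_closure.trans (h.closure_subset _))⟩,
    fun i => (hseg _).closure_subset _⟩
  · simp [(hseg 0).head, h.head]
  · have hj : M ≤ i / K := (Nat.le_div_iff_mul_le hK).2 hi
    rw [(hseg _).tail _ (by rw [hm _ hj]; exact Nat.zero_le _), h.tail _ (by omega)]
  · rcases Nat.add_one_div_mod_cases hK i with ⟨hdiv, hmod⟩ | ⟨hdiv, hmod, hlast⟩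
    · rw [hdiv, hmod]
      exact (hseg _).mem_succ _
    · rw [hdiv, hmod, (hseg _).head, ← (hseg _).tail K (hmK _)]
      simpa only [hlast] using (hseg (i / K)).mem_succ (i % K)

/-- The path is the limit of the step functions `t ↦ p n ⌊t * M n⌋₊`: the `n`-th one moves by
less than the link size `1 / 2 / 2 ^ n` between stages and between adjacent parameters. -/
theorem joinedIn_of_isLinkChain_refinements [CompleteSpace X] {V : Set X} {a b : X}
    {M K : ℕ → ℕ} {p : ℕ → ℕ → X} {D : ℕ → ℕ → Set X}
    (hch : ∀ n, IsLinkChain V (1 / 2 / 2 ^ n) a b (M n) (p n) (D n))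
    (hM : ∀ n, M (n + 1) = M n * K n) (hK : ∀ n, 0 < K n)
    (hD : ∀ n i, closure (D (n + 1) i) ⊆ D n (i / K n)) : JoinedIn V a b := by
  set j : ℕ → ℝ → ℕ := fun n t => ⌊t * M n⌋₊
  set u : ℕ → ℝ → X := fun n t => p n (j n t)
  have hj (n : ℕ) (t : ℝ) : j (n + 1) t / K n = j n t := by
    have hKn : (K n : ℝ) ≠ 0 := Nat.cast_ne_zero.2 (hK n).ne'
    simp only [j, hM, Nat.cast_mul, ← Nat.floor_div_natCast, ← mul_assoc,
      mul_div_cancel_right₀ _ hKn]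
  have hsucc (n : ℕ) (t : ℝ) : u (n + 1) t ∈ D n (j n t) :=
    hj n t ▸ hD n _ (subset_closure ((hch (n + 1)).mem _))
  have hnest (t : ℝ) (n : ℕ) : u n t ∈ D 0 (j 0 t) := by
    suffices ∀ n, D n (j n t) ⊆ D 0 (j 0 t) from this n ((hch n).mem _)
    intro n
    induction n with
    | zero => exact subset_rfl
    | succ n ih => exact (subset_closure.trans (hj n t ▸ hD n _)).trans ih
  have hstep (t : ℝ) (n : ℕ) : dist (u n t) (u (n + 1) t) ≤ 1 / 2 / 2 ^ n := by
    rw [dist_comm]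
    exact (mem_ball.1 ((hch n).subset_ball _ (hsucc n t))).le
  choose γ hγ using fun t =>
    cauchySeq_tendsto_of_complete (cauchySeq_of_le_geometric_two (hstep t))
  have happrox (n : ℕ) (t : ℝ) : dist (u n t) (γ t) ≤ 1 / 2 ^ n :=
    dist_le_of_le_geometric_two_of_tendsto (hstep t) (hγ t) n
  have hosc (n : ℕ) : ∃ δ > 0, ∀ s t, dist s t < δ → dist (u n s) (u n t) ≤ 1 / 2 ^ n :=
    ⟨1 / (M n + 1), by positivity, fun s t hst => ((hch n).dist_floor_mul_le hst).trans
      (div_le_div_of_nonneg_right (by norm_num) (by positivity))⟩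
  have hc : Tendsto (fun n : ℕ => 1 / (2 : ℝ) ^ n) atTop (𝓝 0) :=
    tendsto_const_nhds.div_atTop (tendsto_pow_atTop_atTop_of_one_lt one_lt_two)
  have hcont : Continuous γ := (uniformContinuous_of_forall_dist_le hc happrox hosc).continuous
  have hγ0 : γ 0 = a := tendsto_nhds_unique (hγ 0) (by simp [u, j, (hch _).head])
  have hγ1 : γ 1 = b :=
    tendsto_nhds_unique (hγ 1) (by simp [u, j, (hch _).tail _ le_rfl])
  have hγV (t : ℝ) : γ t ∈ V :=
    (hch 0).closure_subset _ (mem_closure_of_tendsto (hγ t) (Eventually.of_forall (hnest t)))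
  exact ⟨⟨⟨fun t => γ t, hcont.comp continuous_subtype_val⟩, hγ0, hγ1⟩, fun t => hγV t⟩

theorem IsOpen.joinedIn_of_isPreconnected [CompleteSpace X] [LocallyConnectedSpace X]
    {V : Set X} (hV : IsOpen V) (hVc : IsPreconnected V) {a b : X} (ha : a ∈ V) (hb : b ∈ V) :
    JoinedIn V a b := by
  obtain ⟨M₀, p₀, D₀, h₀⟩ := hVc.exists_isLinkChain hV ha hb (by norm_num : (0 : ℝ) < 1 / 2 / 2 ^ 0)
  obtain ⟨s, hs⟩ := exists_seq_of_step
    (fun n (s : ℕ × (ℕ → X) × (ℕ → Set X)) => IsLinkChain V (1 / 2 / 2 ^ n) a b s.1 s.2.1 s.2.2)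
    (fun _ s t => ∃ K, 0 < K ∧ t.1 = s.1 * K ∧ ∀ i, closure (t.2.2 i) ⊆ s.2.2 (i / K))
    (a := (M₀, p₀, D₀)) h₀ fun n s hs => by
      obtain ⟨K, hK, p', D', h', hD'⟩ :=
        hs.exists_refinement (by positivity : (0 : ℝ) < 1 / 2 / 2 ^ (n + 1))
      exact ⟨(s.1 * K, p', D'), h', K, hK, rfl, hD'⟩
  choose K hK hM hD using fun n => (hs n).2
  exact joinedIn_of_isLinkChain_refinements (fun n => (hs n).1) hM hK hD

theorem continuousOn_extend_floor {Y : Type*} [TopologicalSpace Y] {z : ℕ → Y}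
    (Γ : ∀ n, Path (z n) (z (n + 1))) :
    ContinuousOn (fun s => (Γ ⌊s⌋₊).extend (s - ⌊s⌋₊)) (Ici 0) := by
  have hAeq (n : ℕ) : EqOn (fun s => (Γ ⌊s⌋₊).extend (s - ⌊s⌋₊)) (fun s => (Γ n).extend (s - n))
      (Icc n (n + 1)) := by
    intro s hs
    rcases hs.2.lt_or_eq with hlt | rfl
    · have : ⌊s⌋₊ = n := (Nat.floor_eq_iff (by linarith [hs.1, Nat.cast_nonneg (α := ℝ) n])).2
        ⟨hs.1, hlt⟩
      simp only
      rw [this]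
    · have : ⌊(n : ℝ) + 1⌋₊ = n + 1 := by exact_mod_cast Nat.floor_natCast (n + 1)
      simp [this]
  have := locallyFinite_Icc_natCast.continuousOn_iUnion (fun _ => isClosed_Icc) fun n =>
    ((Γ n).continuous_extend.comp (continuous_sub_right _)).continuousOn.congr (hAeq n)
  convert this using 1
  ext s
  simp only [mem_Ici, mem_iUnion, mem_Icc]
  refine ⟨fun hs => ⟨⌊s⌋₊, Nat.floor_le hs, (Nat.lt_floor_add_one s).le⟩, ?_⟩
  rintro ⟨n, hn, -⟩
  exact (Nat.cast_nonneg n).trans hn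

theorem tendsto_div_one_sub_nhdsLT_one : Tendsto (fun t : ℝ => t / (1 - t)) (𝓝[<] 1) atTop := by
  have h : Tendsto (fun t : ℝ => 1 - t) (𝓝[<] 1) (𝓝[>] 0) :=
    tendsto_nhdsWithin_iff.2 ⟨((continuous_const.sub continuous_id).tendsto' 1 0
      (sub_self 1)).mono_left nhdsWithin_le_nhds,
      eventually_nhdsWithin_of_forall fun t (ht : t < 1) => sub_pos.2 ht⟩
  simpa [div_eq_mul_inv] using (tendsto_id.mono_left nhdsWithin_le_nhds).pos_mul_atTop one_pos
    (tendsto_inv_nhdsGT_zero.comp h)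

/-- The paths `Γ n` are run on `[n, n + 1]`, and `[0, 1)` is stretched onto `[0, ∞)`. -/
theorem accessible_iUnion_of_tendsto_smallSets {x : X} {z : ℕ → X}
    (Γ : ∀ n, Path (z n) (z (n + 1))) {C : ℕ → Set X} (hΓ : ∀ n t, Γ n t ∈ C n)
    (hC : Tendsto C atTop (𝓝 x).smallSets) : Accessible (⋃ n, C n) x := by
  set A : ℝ → X := fun s => (Γ ⌊s⌋₊).extend (s - ⌊s⌋₊)
  have hAC (s : ℝ) : A s ∈ C ⌊s⌋₊ := hΓ _ _
  have hAtop : Tendsto A atTop (𝓝 x) := tendsto_def.2 fun U hU => by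
    obtain ⟨N, hN⟩ := eventually_atTop.1 (tendsto_smallSets_iff.1 hC U hU)
    filter_upwards [eventually_ge_atTop (N : ℝ)] with s hs using hN _ (Nat.le_floor hs) (hAC s)
  have hφ : ContinuousOn (fun t : ℝ => t / (1 - t)) (Ico 0 1) :=
    continuousOn_id.div (continuousOn_const.sub continuousOn_id) fun t ht => (sub_pos.2 ht.2).ne'
  have hφmaps : MapsTo (fun t : ℝ => t / (1 - t)) (Ico 0 1) (Ici 0) :=
    fun t ht => div_nonneg ht.1 (sub_pos.2 ht.2).le
  classical
  refine ⟨Function.update (fun t => A (t / (1 - t))) 1 x,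
    continuousOn_update_iff.2 ⟨?_, fun _ => ?_⟩, Function.update_self .., ?_⟩
  · rw [Icc_sdiff_right]
    exact (continuousOn_extend_floor Γ).comp hφ hφmaps
  · rw [Icc_sdiff_right]
    exact (hAtop.comp tendsto_div_one_sub_nhdsLT_one).mono_left
      (nhdsWithin_mono _ fun t ht => ht.2)
  · rintro _ ⟨t, ht, rfl⟩
    rw [Function.update_of_ne ht.2.ne]
    exact mem_iUnion_of_mem _ (hAC _)

theorem IsChainIn.accessible [CompleteSpace X] [LocallyConnectedSpace X] {Ω : Set X}
    {C : ℕ → Set X} {x : X} (hC : IsChainIn Ω C) (hCo : ∀ n, IsOpen (C n))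
    (hx : Tendsto C atTop (𝓝 x).smallSets) : Accessible Ω x := by
  choose z hz using fun n => (hC.1 (n + 1)).2.1.nonempty
  have hjoin (n : ℕ) : JoinedIn (C n) (z n) (z (n + 1)) :=
    (hCo n).joinedIn_of_isPreconnected (hC.1 n).2.1.isPreconnected (hC.2.1 n (hz n))
      (hC.2.1 n (hC.2.1 (n + 1) (hz (n + 1))))
  obtain ⟨γ, hγc, hγ1, hγC⟩ := accessible_iUnion_of_tendsto_smallSets
    (fun n => (hjoin n).somePath) (fun n => (hjoin n).somePath_mem) hx
  exact ⟨γ, hγc, hγ1, hγC.trans (iUnion_subset fun n => (hC.1 n).2.2.1)⟩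

end Paths

/-- If `Ω` is finitely connected at the boundary, then every prime chain has a
singleton impression, and every boundary point is accessible and is the
impression of some prime chain. -/
theorem statement13 {X : Type*} [MetricSpace X] [ProperSpace X] [LocallyConnectedSpace X]
    (Ω : Set X) (hΩ : BoundedDomain Ω)
    (hfc : ∀ x ∈ frontier Ω, FinitelyConnectedAt Ω x) :
    (∀ E : ℕ → Set X, IsPrimeChain Ω E → ∃ x : X, (⋂ k, closure (E k)) = {x}) ∧
    ∀ x ∈ frontier Ω, Accessible Ω x ∧
      ∃ E : ℕ → Set X, IsPrimeChain Ω E ∧ (⋂ k, closure (E k)) = {x} := by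
  refine ⟨fun E hE => ?_, fun x hx => ?_⟩
  · obtain ⟨x, hxE⟩ := hE.1.iInter_closure_nonempty
    have hxΩ : x ∈ frontier Ω := hE.1.2.2.2 hxE
    obtain ⟨C, hC, -, hCx, hCE⟩ := exists_chain_tendsto_smallSets hΩ hxΩ (hfc x hxΩ)
      (antitone_nat_of_succ_le hE.1.2.1) (fun k => (hE.1.1 k).2.2.1) (mem_iInter.1 hxE)
    have hCdivE : Divides C E := divides_of_tendsto_smallSets hE.1
      (fun n => (hC.1 n).2.1.isPreconnected) (fun n => (hC.1 n).2.2.1) hCE hCx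
    refine ⟨x, Subset.antisymm ?_ (singleton_subset_iff.2 hxE)⟩
    calc ⋂ k, closure (E k) ⊆ ⋂ n, closure (C n) := (hE.2 C hC hCdivE).2.iInter_closure_subset
      _ = {x} := hC.iInter_closure_eq_singleton hCx
  · obtain ⟨C, hC, hCo, hCx, -⟩ := exists_chain_tendsto_smallSets hΩ hx (hfc x hx)
      antitone_const (fun _ => subset_rfl) (fun _ => hx.1)
    exact ⟨hC.accessible hCo hCx, C, isPrimeChain_of_tendsto_smallSets hC hCx,
      hC.iInter_closure_eq_singleton hCx⟩
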